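/- Let M be a cocomplete category with a zero object 0 and with a monoidal structure ⊗ preserving colimits in each variable. For a morphism h : A → B let cofib(h) denote the pushout of h along the unique map A → 0. Then for any morphisms f : X → Y and g : U → V there is a natural isomorphism cofib(f) ⊗ cofib(g) ≅ cofib(f □ g), where f □ g : (X⊗V) ⊔_{X⊗U} (Y⊗U) → Y⊗V is the pushout-product. -/

import Mathlib

/-!
STATEMENT 11: Let `M` be a cocomplete category with a zero object, with a monoidal
structure `⊗` preserving colimits in each variable.  For `h : A ⟶ B` let
`cofib h` be the pushout of `h` along `A ⟶ 0`.  Then for any `f : X ⟶ Y` and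
`g : U ⟶ V` there is a natural (canonical) isomorphism
`cofib f ⊗ cofib g ≅ cofib (f □ g)`, where `f □ g` is the pushout-product; naturality
(canonicity) is expressed by compatibility with the canonical projections from `Y ⊗ V`.
-/

open CategoryTheory Limits MonoidalCategory ZeroObject

namespace FrankeStmt11

variable {M : Type 1} [Category.{0} M] [HasColimits M] [HasZeroObject M]
  [MonoidalCategory M]

/-- The cofibre of a morphism: the pushout of `h` along the unique map `A ⟶ 0`. -/
noncomputable def cofib {A B : M} (h : A ⟶ B) : M :=
  pushout h (default : A ⟶ 0)

/-- The canonical projection `B ⟶ cofib h`. -/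
noncomputable def cofibProj {A B : M} (h : A ⟶ B) : B ⟶ cofib h :=
  pushout.inl h (default : A ⟶ 0)

/-- The pushout-product `f □ g : (X⊗V) ⊔_{X⊗U} (Y⊗U) ⟶ Y⊗V` of `f : X ⟶ Y` and
`g : U ⟶ V`. -/
noncomputable def pushoutProd {X Y U V : M} (f : X ⟶ Y) (g : U ⟶ V) :
    pushout (X ◁ g) (f ▷ U) ⟶ Y ⊗ V :=
  pushout.desc (f ▷ V) (Y ◁ g) (whisker_exchange f g)

/-! ### Auxiliary machinery -/

set_option linter.unusedSectionVars false

/-- A morphism factors through some initial object. -/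
def FTI {S T : M} (u : S ⟶ T) : Prop :=
  ∃ (I : M) (_ : IsInitial I) (p : S ⟶ I) (q : I ⟶ T), u = p ≫ q

lemma fti_eq {S T : M} {u v : S ⟶ T} (hu : FTI u) (hv : FTI v) : u = v := by
  obtain ⟨I, hI, p, q, rfl⟩ := hu
  obtain ⟨J, hJ, p', q', rfl⟩ := hv
  have hq : q = hI.to (0 : M) ≫ (isZero_zero M).to_ T := hI.hom_ext _ _
  have hq' : q' = hJ.to (0 : M) ≫ (isZero_zero M).to_ T := hJ.hom_ext _ _
  rw [hq, hq', ← Category.assoc, ← Category.assoc]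
  congr 1
  exact (isZero_zero M).eq_of_tgt _ _

lemma fti_comp_left {S T T' : M} {u : S ⟶ T} (hu : FTI u) (w : T ⟶ T') : FTI (u ≫ w) := by
  obtain ⟨I, hI, p, q, rfl⟩ := hu
  exact ⟨I, hI, p, q ≫ w, by simp⟩

lemma fti_comp_right {S' S T : M} {u : S ⟶ T} (hu : FTI u) (w : S' ⟶ S) : FTI (w ≫ u) := by
  obtain ⟨I, hI, p, q, rfl⟩ := hu
  exact ⟨I, hI, w ≫ p, q, by simp⟩

lemma fti_through_zero {S T : M} (p : S ⟶ (0 : M)) (q : (0 : M) ⟶ T) : FTI (p ≫ q) :=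
  ⟨0, HasZeroObject.zeroIsInitial, p, q, rfl⟩

lemma fti_through_initial {S T I : M} (hI : IsInitial I) (p : S ⟶ I) (q : I ⟶ T) :
    FTI (p ≫ q) :=
  ⟨I, hI, p, q, rfl⟩

lemma fti_from_initial {S T : M} (hS : IsInitial S) (u : S ⟶ T) : FTI u :=
  ⟨S, hS, 𝟙 S, u, by simp⟩

lemma fti_of_eq {S T : M} {u v : S ⟶ T} (hu : FTI u) (h : u = v) : FTI v := h ▸ hu

instance aux_epi_default {A : M} : Epi (default : A ⟶ (0 : M)) :=
  ⟨fun u v _ => (isZero_zero M).eq_of_src u v⟩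

instance aux_epi_cofibProj {A B : M} (h : A ⟶ B) : Epi (cofibProj h) := by
  unfold cofibProj; exact pushout.inl_of_epi

noncomputable def aux_initial_zero_tensor [∀ X : M, PreservesColimits (tensorRight X)]
    (W : M) : IsInitial ((0 : M) ⊗ W) :=
  IsInitial.isInitialObj (tensorRight W) _ ((isZero_zero M).isInitial)

noncomputable def aux_initial_tensor_zero [∀ X : M, PreservesColimits (tensorLeft X)]
    (W : M) : IsInitial (W ⊗ (0 : M)) :=
  IsInitial.isInitialObj (tensorLeft W) _ ((isZero_zero M).isInitial)

lemma fti_comp_cofibProj {A B : M} (h : A ⟶ B) : FTI (h ≫ cofibProj h) :=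
  fti_of_eq (fti_through_zero default (pushout.inr h default)) (pushout.condition).symm

section Main

variable [∀ X : M, PreservesColimits (tensorLeft X)]
  [∀ X : M, PreservesColimits (tensorRight X)]
  {X Y U V : M} (f : X ⟶ Y) (g : U ⟶ V)

lemma fti_inlProd : FTI (f ▷ V ≫ cofibProj (pushoutProd f g)) := by
  have h1 : f ▷ V = pushout.inl (X ◁ g) (f ▷ U) ≫ pushoutProd f g := by
    rw [pushoutProd, pushout.inl_desc]
  rw [h1, Category.assoc]
  exact fti_comp_right (fti_comp_cofibProj (pushoutProd f g)) _

lemma fti_inrProd : FTI (Y ◁ g ≫ cofibProj (pushoutProd f g)) := by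
  have h1 : Y ◁ g = pushout.inr (X ◁ g) (f ▷ U) ≫ pushoutProd f g := by
    rw [pushoutProd, pushout.inr_desc]
  rw [h1, Category.assoc]
  exact fti_comp_right (fti_comp_cofibProj (pushoutProd f g)) _

/-- The map `cofib f ⊗ V ⟶ cofib (f □ g)`. -/
noncomputable def auxA : cofib f ⊗ V ⟶ cofib (pushoutProd f g) :=
  (PreservesPushout.iso (tensorRight V) f (default : X ⟶ 0)).inv ≫
    pushout.desc (cofibProj (pushoutProd f g)) ((aux_initial_zero_tensor V).to _)
      (by
        apply fti_eq
        · exact fti_of_eq (fti_inlProd f g) (by rfl)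
        · exact fti_comp_right (fti_from_initial (aux_initial_zero_tensor V) _) _)

lemma whiskerRight_proj_auxA :
    cofibProj f ▷ V ≫ auxA f g = cofibProj (pushoutProd f g) := by
  unfold auxA
  erw [← Category.assoc]
  have h : cofibProj f ▷ V ≫
      (PreservesPushout.iso (tensorRight V) f (default : X ⟶ 0)).inv
      = pushout.inl _ _ := by
    rw [show cofibProj f ▷ V = (tensorRight V).map (pushout.inl f default) by
      rfl]
    exact PreservesPushout.inl_iso_inv (tensorRight V) f default
  rw [h, pushout.inl_desc]

/-- The map `ψ : cofib f ⊗ cofib g ⟶ cofib (f □ g)`. -/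
noncomputable def auxPsi : cofib f ⊗ cofib g ⟶ cofib (pushoutProd f g) :=
  (PreservesPushout.iso (tensorLeft (cofib f)) g (default : U ⟶ 0)).inv ≫
    pushout.desc (auxA f g) ((aux_initial_tensor_zero (cofib f)).to _)
      (by
        change cofib f ◁ g ≫ auxA f g = cofib f ◁ (default : U ⟶ 0) ≫ _
        erw [← cancel_epi (PreservesPushout.iso (tensorRight U) f (default : X ⟶ 0)).hom]
        apply pushout.hom_ext
        · erw [← Category.assoc, ← Category.assoc, PreservesPushout.inl_iso_hom,
            show (tensorRight U).map (pushout.inl f (default : X ⟶ 0)) = cofibProj f ▷ U from rfl,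
            Category.assoc]
          apply fti_eq
          · apply fti_of_eq (fti_inrProd f g)
            erw [← Category.assoc, ← whisker_exchange (cofibProj f) g, Category.assoc,
              whiskerRight_proj_auxA]
          · exact fti_comp_right (fti_comp_right
              (fti_through_initial (aux_initial_tensor_zero (cofib f)) _ _) _) _
        · apply (aux_initial_zero_tensor U).hom_ext)

lemma proj_tensor_proj_psi :
    (cofibProj f ⊗ₘ cofibProj g) ≫ auxPsi f g = cofibProj (pushoutProd f g) := by
  unfold auxPsi
  erw [MonoidalCategory.tensorHom_def, Category.assoc, ← Category.assoc (cofib f ◁ cofibProj g)]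
  have h : cofib f ◁ cofibProj g ≫
      (PreservesPushout.iso (tensorLeft (cofib f)) g (default : U ⟶ 0)).inv
      = pushout.inl _ _ := by
    rw [show cofib f ◁ cofibProj g = (tensorLeft (cofib f)).map (pushout.inl g default) by
      rfl]
    exact PreservesPushout.inl_iso_inv (tensorLeft (cofib f)) g default
  rw [h, pushout.inl_desc, whiskerRight_proj_auxA]

/-- The map `φ : cofib (f □ g) ⟶ cofib f ⊗ cofib g`. -/
noncomputable def auxPhi : cofib (pushoutProd f g) ⟶ cofib f ⊗ cofib g :=
  pushout.desc (cofibProj f ⊗ₘ cofibProj g) ((isZero_zero M).to_ _)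
    (by
      apply pushout.hom_ext
      · rw [← Category.assoc, ← Category.assoc]
        have h1 : pushout.inl (X ◁ g) (f ▷ U) ≫ pushoutProd f g = f ▷ V := by
          rw [pushoutProd, pushout.inl_desc]
        rw [h1]
        apply fti_eq
        · rw [MonoidalCategory.tensorHom_def, ← Category.assoc, ← comp_whiskerRight]
          have h2 : f ≫ cofibProj f = default ≫ pushout.inr f default :=
            pushout.condition
          rw [h2]; erw [comp_whiskerRight, Category.assoc]
          exact fti_through_initial (aux_initial_zero_tensor V) _ _
        · rw [Category.assoc]
          exact fti_comp_right (fti_through_zero _ _) _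
      · rw [← Category.assoc, ← Category.assoc]
        have h1 : pushout.inr (X ◁ g) (f ▷ U) ≫ pushoutProd f g = Y ◁ g := by
          rw [pushoutProd, pushout.inr_desc]
        rw [h1]
        apply fti_eq
        · rw [MonoidalCategory.tensorHom_def', ← Category.assoc, ← MonoidalCategory.whiskerLeft_comp]
          have h2 : g ≫ cofibProj g = default ≫ pushout.inr g default :=
            pushout.condition
          rw [h2]; erw [MonoidalCategory.whiskerLeft_comp, Category.assoc]
          exact fti_through_initial (aux_initial_tensor_zero Y) _ _
        · rw [Category.assoc]
          exact fti_comp_right (fti_through_zero _ _) _)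

instance : Epi (cofibProj f ⊗ₘ cofibProj g) := by
  rw [MonoidalCategory.tensorHom_def]
  have h1 : Epi (cofibProj f ▷ V) := by
    rw [show cofibProj f ▷ V = (tensorRight V).map (cofibProj f) by rfl]
    exact (tensorRight V).map_epi _
  have h2 : Epi (cofib f ◁ cofibProj g) := by
    rw [show cofib f ◁ cofibProj g = (tensorLeft (cofib f)).map (cofibProj g) by rfl]
    exact (tensorLeft (cofib f)).map_epi _
  exact epi_comp _ _

end Main

theorem cofib_tensor_cofib_iso_cofib_pushoutProd
    [∀ X : M, PreservesColimits (tensorLeft X)]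
    [∀ X : M, PreservesColimits (tensorRight X)]
    {X Y U V : M} (f : X ⟶ Y) (g : U ⟶ V) :
    ∃ e : cofib f ⊗ cofib g ≅ cofib (pushoutProd f g),
      (cofibProj f ⊗ₘ cofibProj g) ≫ e.hom = cofibProj (pushoutProd f g) := by
  refine ⟨⟨auxPsi f g, auxPhi f g, ?_, ?_⟩, proj_tensor_proj_psi f g⟩
  · rw [← cancel_epi (cofibProj f ⊗ₘ cofibProj g), Category.comp_id, ← Category.assoc,
      proj_tensor_proj_psi]
    unfold auxPhi cofibProj
    exact pushout.inl_desc _ _ _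
  · apply pushout.hom_ext
    · erw [← Category.assoc]
      unfold auxPhi
      rw [pushout.inl_desc]
      exact (proj_tensor_proj_psi f g).trans (Category.comp_id _).symm
    · exact (isZero_zero M).eq_of_src _ _



end FrankeStmt11
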